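/- For the classical heat kernel W_t(x,y) = (4πt)^{-n/2} e^{-|x-y|²/(4t)} and ρ > 2, the variation seminorm of the kernel difference satisfies ‖W_t(x,·) − W_t(x₁,·)‖_{E_ρ}(y) ≤ C |x − x₁| / |x − y|^{n+1} whenever |x − y| ≥ 2|x − x₁|, with C depending only on n and ρ. -/

import Mathlib

open MeasureTheory Filter Set
open scoped ENNReal

noncomputable section

/-- A strictly decreasing sequence of positive reals converging to zero. -/
def NullSeq (t : ℕ → ℝ) : Prop :=
  StrictAnti t ∧ (∀ j, 0 < t j) ∧ Tendsto t atTop (nhds 0)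

/-- The `ρ`-variation seminorm `‖F‖_{E_ρ}`: the supremum, over all strictly decreasing
null sequences `{t_j}`, of `(∑_j |F(t_j) - F(t_{j+1})|^ρ)^{1/ρ}` (valued in `ℝ≥0∞`). -/
def eVar (ρ : ℝ) (F : ℝ → ℝ) : ℝ≥0∞ :=
  ⨆ t : {t : ℕ → ℝ // NullSeq t},
    (∑' j : ℕ, ENNReal.ofReal (|F (t.1 j) - F (t.1 (j + 1))| ^ ρ)) ^ (1 / ρ)

/-- The classical heat kernel `W_t(x,y) = (4πt)^{-n/2} e^{-|x-y|²/(4t)}`. -/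
def heatKernel (n : ℕ) (t : ℝ) (x y : EuclideanSpace ℝ (Fin n)) : ℝ :=
  (4 * Real.pi * t) ^ (-(n : ℝ) / 2) * Real.exp (-‖x - y‖ ^ 2 / (4 * t))

/-!
For `ρ ≥ 1` the `ρ`-variation along a null sequence is at most the total variation, hence at most
`∫₀^∞ |∂ₜ F|`. Write `W_t(x, y) = w(‖x - y‖², t)` and let `a = ‖x - y‖²`, `b = ‖x₁ - y‖²`,
`r = ‖x - y‖`; then `a, b ≥ r²/4`. The mean value theorem in the squared distance bounds
`|∂ₜ w(a, t) - ∂ₜ w(b, t)|` by `|a - b|` times the supremum of the mixed derivative `∂ₛ∂ₜ w(s, t)`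
over `s ≥ r²/4`, which is `O(t^(-n/2-2) e^(-r²/(32t)))`. The substitution `t ↦ 1/t` turns the
integral of this majorant into a Gamma integral, equal to `Γ(n/2+1) (32/r²)^(n/2+1)`, and
`|a - b| ≤ (5/2) r ‖x - x₁‖` gives the factor `‖x - x₁‖ / r^(n+1)`.
-/

open Real

theorem ENNReal.tsum_rpow_rpow_one_div_le_tsum {ι : Type*} (a : ι → ℝ≥0∞) {ρ : ℝ} (hρ : 1 ≤ ρ) :
    (∑' j, a j ^ ρ) ^ (1 / ρ) ≤ ∑' j, a j := by
  have hρ₁ : 0 ≤ ρ - 1 := by linarith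
  have hsplit (b : ℝ≥0∞) : b ^ ρ = b * b ^ (ρ - 1) := by
    simpa using ENNReal.rpow_add_of_nonneg (x := b) 1 (ρ - 1) zero_le_one hρ₁
  rw [one_div, ENNReal.rpow_inv_le_iff (by linarith), hsplit (∑' j, a j), ← ENNReal.tsum_mul_right]
  refine ENNReal.tsum_le_tsum fun j => ?_
  rw [hsplit]
  gcongr
  exact ENNReal.le_tsum j

theorem enorm_sub_le_lintegral_enorm_deriv {E : Type*} [NormedAddCommGroup E] [NormedSpace ℝ E]
    [CompleteSpace E] {F : ℝ → E} {u v : ℝ} (huv : v ≤ u)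
    (hF : ∀ x ∈ Icc v u, DifferentiableAt ℝ F x) :
    ‖F u - F v‖ₑ ≤ ∫⁻ x in Ioc v u, ‖deriv F x‖ₑ := by
  rcases eq_or_ne (∫⁻ x in Ioc v u, ‖deriv F x‖ₑ) ⊤ with h | h
  · simp [h]
  have hint : IntegrableOn (deriv F) (Ioc v u) :=
    ⟨aestronglyMeasurable_deriv F _, h.lt_top⟩
  rw [← intervalIntegral.integral_deriv_eq_sub (by rwa [uIcc_of_le huv])
    ((intervalIntegrable_iff_integrableOn_Ioc_of_le huv).2 hint), intervalIntegral.integral_of_le huv]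
  exact enorm_integral_le_lintegral_enorm _

theorem tsum_enorm_sub_le_lintegral_enorm_deriv {E : Type*} [NormedAddCommGroup E]
    [NormedSpace ℝ E] [CompleteSpace E] {F : ℝ → E} (hF : ∀ x > 0, DifferentiableAt ℝ F x)
    {t : ℕ → ℝ} (ht : Antitone t) (hpos : ∀ j, 0 < t j) :
    ∑' j, ‖F (t j) - F (t (j + 1))‖ₑ ≤ ∫⁻ x in Ioi 0, ‖deriv F x‖ₑ := calc
  ∑' j, ‖F (t j) - F (t (j + 1))‖ₑ ≤ ∑' j, ∫⁻ x in Ioc (t (j + 1)) (t j), ‖deriv F x‖ₑ :=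
    ENNReal.tsum_le_tsum fun j => enorm_sub_le_lintegral_enorm_deriv (ht j.le_succ)
      fun x hx => hF x ((hpos _).trans_le hx.1)
  _ = ∫⁻ x in ⋃ j, Ioc (t (j + 1)) (t j), ‖deriv F x‖ₑ :=
    (lintegral_iUnion (fun _ => measurableSet_Ioc) ht.pairwise_disjoint_on_Ioc_succ _).symm
  _ ≤ ∫⁻ x in Ioi 0, ‖deriv F x‖ₑ :=
    lintegral_mono_set (iUnion_subset fun _ _ hx => (hpos _).trans hx.1)

theorem eVar_le_lintegral_enorm_deriv {ρ : ℝ} (hρ : 1 ≤ ρ) {F : ℝ → ℝ}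
    (hF : ∀ x > 0, DifferentiableAt ℝ F x) :
    eVar ρ F ≤ ∫⁻ x in Ioi 0, ‖deriv F x‖ₑ := by
  refine iSup_le fun ⟨t, ht, hpos, _⟩ => ?_
  simp_rw [← ENNReal.ofReal_rpow_of_nonneg (abs_nonneg _) (by linarith : (0:ℝ) ≤ ρ),
    ← Real.enorm_eq_ofReal_abs]
  exact (ENNReal.tsum_rpow_rpow_one_div_le_tsum _ hρ).trans
    (tsum_enorm_sub_le_lintegral_enorm_deriv hF ht.antitone hpos)

-- `heatKernel n t x y` is `heatProfile n (‖x - y‖ ^ 2) t` by definition.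
def heatProfile (n : ℕ) (s t : ℝ) : ℝ := (4 * π * t) ^ (-(n : ℝ) / 2) * exp (-s / (4 * t))

def heatProfileTimeDeriv (n : ℕ) (s t : ℝ) : ℝ :=
  heatProfile n s t * (s / (4 * t ^ 2) - n / (2 * t))

theorem hasDerivAt_heatProfile_time (n : ℕ) (s : ℝ) {t : ℝ} (ht : 0 < t) :
    HasDerivAt (heatProfile n s) (heatProfileTimeDeriv n s t) t := by
  have hpow : HasDerivAt (fun u => (4 * π * u) ^ (-(n : ℝ) / 2))
      ((4 * π) * (-(n : ℝ) / 2) * (4 * π * t) ^ (-(n : ℝ) / 2 - 1)) t := by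
    simpa using ((hasDerivAt_id t).const_mul (4 * π)).rpow_const (Or.inl (by positivity))
  have hexp : HasDerivAt (fun u => exp (-s / (4 * u)))
      (exp (-s / (4 * t)) * (s / (4 * t ^ 2))) t := by
    have := ((hasDerivAt_id t).const_mul 4).fun_inv (by positivity) |>.const_mul (-s) |>.exp
    convert this using 1
    · ext u; simp [div_eq_mul_inv]
    · simp only [id]; field_simp
  refine (hpow.fun_mul hexp).congr_deriv ?_
  simp only [heatProfileTimeDeriv, heatProfile]
  rw [Real.rpow_sub_one (by positivity)]
  field_simp
  ring

theorem hasDerivAt_heatProfileTimeDeriv_space (n : ℕ) (s t : ℝ) :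
    HasDerivAt (fun s => heatProfileTimeDeriv n s t)
      (heatProfile n s t * (1 + n / 2 - s / (4 * t)) / (4 * t ^ 2)) s := by
  have hW : HasDerivAt (fun s => heatProfile n s t) (-heatProfile n s t / (4 * t)) s := by
    refine (((hasDerivAt_id s).neg.div_const (4 * t)).exp.const_mul
      ((4 * π * t) ^ (-(n : ℝ) / 2))).congr_deriv ?_
    simp only [heatProfile, Pi.neg_apply, id]
    ring
  refine (hW.fun_mul (((hasDerivAt_id s).div_const (4 * t ^ 2)).sub_const (n / (2 * t)))).congr_deriv ?_
  simp only [id]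
  rcases eq_or_ne t 0 with rfl | ht
  · simp
  field_simp
  ring

theorem rpow_mul_exp_neg_div_eq_comp_inv {a β x : ℝ} (hx : 0 < x) :
    (|(-1 : ℝ)| * x ^ ((-1 : ℝ) - 1)) • ((x ^ (-1 : ℝ)) ^ (a - 1) * exp (-(β * x ^ (-1 : ℝ))))
      = x ^ (-a - 1) * exp (-β / x) := by
  rw [smul_eq_mul, ← rpow_mul hx.le, rpow_neg_one, abs_neg, abs_one, one_mul, ← mul_assoc,
    ← rpow_add hx]
  ring_nf

theorem integrableOn_rpow_mul_exp_neg_div_Ioi {a β : ℝ} (ha : 0 < a) (hβ : 0 < β) :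
    IntegrableOn (fun t => t ^ (-a - 1) * exp (-β / t)) (Ioi 0) := by
  have hGamma : IntegrableOn (fun y => y ^ (a - 1) * exp (-(β * y))) (Ioi 0) := by
    simpa using integrableOn_rpow_mul_exp_neg_mul_rpow (p := 1) (by linarith) one_pos hβ
  refine ((integrableOn_Ioi_comp_rpow_iff _ (by norm_num : (-1 : ℝ) ≠ 0)).2 hGamma).congr_fun
    (fun x hx => rpow_mul_exp_neg_div_eq_comp_inv hx) measurableSet_Ioi

theorem integral_rpow_mul_exp_neg_div_Ioi {a β : ℝ} (ha : 0 < a) (hβ : 0 < β) :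
    ∫ t in Ioi 0, t ^ (-a - 1) * exp (-β / t) = β ^ (-a) * Gamma a := by
  rw [← setIntegral_congr_fun measurableSet_Ioi (fun x hx => rpow_mul_exp_neg_div_eq_comp_inv hx),
    integral_comp_rpow_Ioi (fun y => y ^ (a - 1) * exp (-(β * y))) (by norm_num),
    integral_rpow_mul_exp_neg_mul_Ioi ha hβ, one_div, inv_rpow hβ.le, rpow_neg hβ.le]

theorem exp_neg_mul_abs_sub_le {k x : ℝ} (hk : 0 ≤ k) (hx : 0 ≤ x) :
    exp (-x) * |k - x| ≤ (k + 2) * exp (-(x / 2)) := by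
  have hsq : exp (-x) = exp (-(x / 2)) * exp (-(x / 2)) := by rw [← exp_add]; ring_nf
  have hlin : x * exp (-(x / 2)) ≤ 2 := by
    rw [exp_neg, ← div_eq_mul_inv, div_le_iff₀ (exp_pos _)]
    linarith [add_one_le_exp (x / 2)]
  have hone : exp (-(x / 2)) ≤ 1 := exp_le_one_iff.2 (by linarith)
  calc exp (-x) * |k - x| ≤ exp (-x) * (k + x) := by
        gcongr; exact abs_le.2 ⟨by linarith, by linarith⟩
    _ = exp (-(x / 2)) * (k * exp (-(x / 2)) + x * exp (-(x / 2))) := by rw [hsq]; ring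
    _ ≤ exp (-(x / 2)) * (k * 1 + 2) := by gcongr
    _ = (k + 2) * exp (-(x / 2)) := by ring

theorem abs_heatProfile_mixed_deriv_le (n : ℕ) {σ s t : ℝ} (ht : 0 < t) (hσ : 0 ≤ σ)
    (hσs : σ ≤ s) :
    |heatProfile n s t * (1 + n / 2 - s / (4 * t)) / (4 * t ^ 2)|
      ≤ (n / 2 + 3) / 4 * (4 * π) ^ (-(n : ℝ) / 2)
          * (t ^ (-((n : ℝ) / 2 + 1) - 1) * exp (-(σ / 8) / t)) := by
  set x := s / (4 * t)
  set A := (4 * π) ^ (-(n : ℝ) / 2) * t ^ (-(n : ℝ) / 2) / (4 * t ^ 2)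
  have hA : 0 < A := by positivity
  have hx : 0 ≤ x := by have : 0 ≤ s := hσ.trans hσs; positivity
  have hfactor : heatProfile n s t * (1 + n / 2 - x) / (4 * t ^ 2)
      = A * (exp (-x) * (1 + n / 2 - x)) := by
    rw [heatProfile, mul_rpow (by positivity) ht.le]
    simp only [A, x, neg_div]
    ring
  have hdecay : exp (-(x / 2)) ≤ exp (-(σ / 8) / t) := by
    have : σ / 8 / t ≤ x / 2 := calc
      σ / 8 / t = σ / (8 * t) := by ring
      _ ≤ s / (8 * t) := by gcongr
      _ = x / 2 := by ring
    rw [exp_le_exp, neg_div]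
    linarith
  have hpow : t ^ (-((n : ℝ) / 2 + 1) - 1) = t ^ (-(n : ℝ) / 2) / t ^ 2 := by
    rw [show -((n : ℝ) / 2 + 1) - 1 = -(n : ℝ) / 2 - 2 by ring, rpow_sub ht, rpow_two]
  calc |heatProfile n s t * (1 + n / 2 - x) / (4 * t ^ 2)|
      = A * (exp (-x) * |1 + n / 2 - x|) := by
        rw [hfactor, abs_mul, abs_mul, abs_of_pos hA, abs_of_pos (exp_pos _)]
    _ ≤ A * ((1 + n / 2 + 2) * exp (-(σ / 8) / t)) := by
        refine mul_le_mul_of_nonneg_left ?_ hA.le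
        exact (exp_neg_mul_abs_sub_le (by positivity) hx).trans
          (mul_le_mul_of_nonneg_left hdecay (by positivity))
    _ = _ := by rw [hpow]; ring

theorem abs_heatProfileTimeDeriv_sub_le (n : ℕ) {σ a b t : ℝ} (ht : 0 < t) (hσ : 0 ≤ σ)
    (ha : σ ≤ a) (hb : σ ≤ b) :
    |heatProfileTimeDeriv n a t - heatProfileTimeDeriv n b t|
      ≤ (n / 2 + 3) / 4 * (4 * π) ^ (-(n : ℝ) / 2)
          * (t ^ (-((n : ℝ) / 2 + 1) - 1) * exp (-(σ / 8) / t)) * |a - b| := by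
  simpa only [Real.norm_eq_abs] using
    (convex_Ici σ).norm_image_sub_le_of_norm_hasDerivWithin_le
      (fun s _ => (hasDerivAt_heatProfileTimeDeriv_space n s t).hasDerivWithinAt)
      (fun s hs => abs_heatProfile_mixed_deriv_le n ht hσ hs) hb ha

theorem eVar_heatProfile_sub_le (n : ℕ) {ρ σ a b : ℝ} (hρ : 1 ≤ ρ) (hσ : 0 < σ)
    (ha : σ ≤ a) (hb : σ ≤ b) :
    eVar ρ (fun t => heatProfile n a t - heatProfile n b t)
      ≤ ENNReal.ofReal ((n / 2 + 3) / 4 * (4 * π) ^ (-(n : ℝ) / 2)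
          * ((σ / 8) ^ (-((n : ℝ) / 2 + 1)) * Gamma ((n : ℝ) / 2 + 1)) * |a - b|) := by
  set K := (n / 2 + 3) / 4 * (4 * π) ^ (-(n : ℝ) / 2)
  have hm : 0 < (n : ℝ) / 2 + 1 := by positivity
  have hβ : 0 < σ / 8 := by positivity
  have hderiv {t : ℝ} (ht : 0 < t) := (hasDerivAt_heatProfile_time n a ht).fun_sub
    (hasDerivAt_heatProfile_time n b ht)
  have hint := (integrableOn_rpow_mul_exp_neg_div_Ioi hm hβ).const_mul K |>.mul_const |a - b|
  have hnonneg : 0 ≤ᵐ[volume.restrict (Ioi 0)]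
      fun t => K * (t ^ (-((n : ℝ) / 2 + 1) - 1) * exp (-(σ / 8) / t)) * |a - b| :=
    (ae_restrict_iff' measurableSet_Ioi).2 (ae_of_all _ fun t (ht : 0 < t) => by positivity)
  calc eVar ρ (fun t => heatProfile n a t - heatProfile n b t)
      ≤ ∫⁻ t in Ioi 0, ‖deriv (fun t => heatProfile n a t - heatProfile n b t) t‖ₑ :=
        eVar_le_lintegral_enorm_deriv hρ fun t ht => (hderiv ht).differentiableAt
    _ ≤ ∫⁻ t in Ioi 0, ENNReal.ofReal
          (K * (t ^ (-((n : ℝ) / 2 + 1) - 1) * exp (-(σ / 8) / t)) * |a - b|) := by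
        refine setLIntegral_mono' measurableSet_Ioi fun t ht => ?_
        rw [(hderiv ht).deriv, Real.enorm_eq_ofReal_abs]
        exact ENNReal.ofReal_le_ofReal (abs_heatProfileTimeDeriv_sub_le n ht hσ.le ha hb)
    _ = ENNReal.ofReal (∫ t in Ioi 0,
          K * (t ^ (-((n : ℝ) / 2 + 1) - 1) * exp (-(σ / 8) / t)) * |a - b|) :=
        (ofReal_integral_eq_lintegral_ofReal hint hnonneg).symm
    _ = _ := by rw [integral_mul_const, integral_const_mul, integral_rpow_mul_exp_neg_div_Ioi hm hβ]

theorem eVar_const {ρ : ℝ} (hρ : 0 < ρ) (c : ℝ) : eVar ρ (fun _ => c) = 0 := by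
  simp [eVar, zero_rpow hρ.ne', hρ]

section Geometry

variable {E : Type*} [SeminormedAddCommGroup E] {x x₁ y : E}

theorem norm_sub_le_two_mul_norm_sub_of_two_mul_le (h : 2 * ‖x - x₁‖ ≤ ‖x - y‖) :
    ‖x - y‖ ≤ 2 * ‖x₁ - y‖ := by
  linarith [norm_sub_le_norm_sub_add_norm_sub x x₁ y]

theorem abs_sq_norm_sub_sub_sq_norm_sub_le (h : 2 * ‖x - x₁‖ ≤ ‖x - y‖) :
    |‖x - y‖ ^ 2 - ‖x₁ - y‖ ^ 2| ≤ 5 / 2 * ‖x - y‖ * ‖x - x₁‖ := by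
  have hdiff : |‖x - y‖ - ‖x₁ - y‖| ≤ ‖x - x₁‖ := by
    simpa using abs_norm_sub_norm_le (x - y) (x₁ - y)
  have hsum : ‖x - y‖ + ‖x₁ - y‖ ≤ 5 / 2 * ‖x - y‖ := by
    linarith [norm_sub_le_norm_sub_add_norm_sub x₁ x y, norm_sub_rev x₁ x]
  rw [sq_sub_sq, abs_mul, abs_of_nonneg (by positivity : 0 ≤ ‖x - y‖ + ‖x₁ - y‖)]
  gcongr

end Geometry

theorem rpow_sq_div_neg_mul_self (n : ℕ) {r c : ℝ} (hr : 0 < r) (hc : 0 < c) :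
    (r ^ 2 / c) ^ (-((n : ℝ) / 2 + 1)) * r = c ^ ((n : ℝ) / 2 + 1) / r ^ (n + 1) := calc
  (r ^ 2 / c) ^ (-((n : ℝ) / 2 + 1)) * r
      = (c⁻¹ * r ^ (2 : ℝ)) ^ (-((n : ℝ) / 2 + 1)) * r ^ (1 : ℝ) := by
        rw [rpow_two, rpow_one, div_eq_inv_mul]
  _ = c ^ ((n : ℝ) / 2 + 1) * r ^ (-((n + 1 : ℕ) : ℝ)) := by
        rw [mul_rpow (by positivity) (by positivity), inv_rpow hc.le, ← rpow_neg hc.le, neg_neg,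
          ← rpow_mul hr.le, mul_assoc, ← rpow_add hr]
        push_cast
        ring_nf
  _ = c ^ ((n : ℝ) / 2 + 1) / r ^ (n + 1) := by rw [rpow_neg hr.le, rpow_natCast]; ring

theorem eVar_heatKernel_diff_general (n : ℕ) (ρ : ℝ) (hρ : 2 < ρ) :
    ∃ C > 0, ∀ x x₁ y : EuclideanSpace ℝ (Fin n), 2 * ‖x - x₁‖ ≤ ‖x - y‖ →
      eVar ρ (fun t => heatKernel n t x y - heatKernel n t x₁ y)
        ≤ ENNReal.ofReal (C * ‖x - x₁‖ / ‖x - y‖ ^ (n + 1)) := by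
  set m : ℝ := n / 2 + 1
  set K : ℝ := (n / 2 + 3) / 4 * (4 * π) ^ (-(n : ℝ) / 2)
  refine ⟨K * (5 / 2) * 32 ^ m * Gamma m, by positivity, fun x x₁ y h => ?_⟩
  rcases (norm_nonneg (x - y)).eq_or_lt with hr | hr
  · obtain rfl : x₁ = x := by
      rw [eq_comm, ← sub_eq_zero, ← norm_le_zero_iff]; linarith [norm_nonneg (x - x₁)]
    simp only [sub_self, eVar_const (by linarith : (0 : ℝ) < ρ), zero_le]
  set r := ‖x - y‖
  have hσ₁ : r ^ 2 / 4 ≤ r ^ 2 := by linarith [sq_nonneg r]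
  have hσ₂ : r ^ 2 / 4 ≤ ‖x₁ - y‖ ^ 2 := by
    nlinarith [norm_sub_le_two_mul_norm_sub_of_two_mul_le h]
  refine (eVar_heatProfile_sub_le n (by linarith) (by positivity) hσ₁ hσ₂).trans
    (ENNReal.ofReal_le_ofReal ?_)
  calc K * ((r ^ 2 / 4 / 8) ^ (-m) * Gamma m) * |r ^ 2 - ‖x₁ - y‖ ^ 2|
      ≤ K * ((r ^ 2 / 4 / 8) ^ (-m) * Gamma m) * (5 / 2 * r * ‖x - x₁‖) := by
        gcongr
        exact abs_sq_norm_sub_sub_sq_norm_sub_le h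
    _ = K * (5 / 2) * Gamma m * ((r ^ 2 / 32) ^ (-m) * r) * ‖x - x₁‖ := by ring_nf
    _ = _ := by rw [rpow_sq_div_neg_mul_self n hr (by norm_num)]; ring

/-- for the classical heat kernel and `ρ > 2`, the variation seminorm of
the kernel difference satisfies
`‖W_t(x,y) - W_t(x₁,y)‖_{E_ρ} ≤ C |x - x₁| / |x - y|^{n+1}` whenever
`|x - y| ≥ 2 |x - x₁|`, with `C` depending only on `n` and `ρ`. -/
theorem eVar_heatKernel_diff (n : ℕ) (hn : 1 ≤ n) (ρ : ℝ) (hρ : 2 < ρ) :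
    ∃ C > 0, ∀ x x₁ y : EuclideanSpace ℝ (Fin n), 2 * ‖x - x₁‖ ≤ ‖x - y‖ →
      eVar ρ (fun t => heatKernel n t x y - heatKernel n t x₁ y)
        ≤ ENNReal.ofReal (C * ‖x - x₁‖ / ‖x - y‖ ^ (n + 1)) :=
  eVar_heatKernel_diff_general n ρ hρ

end
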